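/- arXiv:1307.2704 — 9 statements merged into one kernel-verified Lean document; each statement's English description precedes it below -/
import Mathlib

section
/- For any covering C of a finite universe U and any x, y ∈ U: y ∈ N(x) if and only if ∂({x}) = ∂({x,y}). -/
open Finset

variable {α : Type*} [Fintype α] [DecidableEq α]

/-- `C` is a covering of the (finite) universe: no empty block, blocks cover everything. -/
def IsCovering (C : Finset (Finset α)) : Prop :=
  ∅ ∉ C ∧ C.sup id = (Finset.univ : Finset α)

/-- Neighborhood of `x`: intersection of all blocks of `C` containing `x`. -/
def Nbhd (C : Finset (Finset α)) (x : α) : Finset α :=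
  (C.filter fun K => x ∈ K).inf id

/-- Repeat degree of `X` w.r.t. `C`. -/
def deg (C : Finset (Finset α)) (X : Finset α) : ℕ :=
  (C.filter fun K => X ⊆ K).card

/-- `I(F)`: all unions of subfamilies of `F`. -/
def IFam (F : Finset (Finset α)) : Finset (Finset α) :=
  F.powerset.image fun D => D.sup id

/-- Reducible elements of `F`. -/
def SFam (F : Finset (Finset α)) : Finset (Finset α) :=
  F.filter fun K => K ∈ IFam (F.erase K)

/-- Reduct of `C`. -/
def reduct (C : Finset (Finset α)) : Finset (Finset α) :=
  C \ SFam C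

/-- Covering of neighborhoods induced by `C`. -/
def Cov (C : Finset (Finset α)) : Finset (Finset α) :=
  Finset.univ.image (Nbhd C)

/-- `Γ(x)`. -/
def Gamma (C : Finset (Finset α)) (x : α) : Finset (Finset α) :=
  C.filter fun K => x ∈ K ∧ ∀ y ∈ K, deg C {x, y} = deg C {x}

/-- `P_C(x)`. -/
def PMap (C : Finset (Finset α)) (x : α) : Finset α :=
  Finset.univ.filter fun y => deg C {x, y} = deg C {x}

/-- Relation induced by a covering. -/
def RelOf (C : Finset (Finset α)) : Set (α × α) :=
  {p | p.2 ∈ Nbhd C p.1}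

theorem stmt2 (C : Finset (Finset α)) (hC : IsCovering C) (x y : α) :
    y ∈ Nbhd C x ↔ deg C {x} = deg C {x, y} := by
  have hsub : C.filter (fun K => {x, y} ⊆ K) ⊆ C.filter (fun K => {x} ⊆ K) := by
    intro K hK
    simp only [Finset.mem_filter, Finset.insert_subset_iff,
      Finset.singleton_subset_iff] at *
    tauto
  constructor
  · intro hy
    simp only [Nbhd, Finset.mem_inf, id] at hy
    apply le_antisymm
    · apply Finset.card_le_card
      intro K hK
      simp only [Finset.mem_filter, Finset.insert_subset_iff,
        Finset.singleton_subset_iff] at *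
      exact ⟨hK.1, hK.2, hy K (by simp [Finset.mem_filter, hK.1, hK.2])⟩
    · exact Finset.card_le_card hsub
  · intro hdeg
    have heq : C.filter (fun K => {x, y} ⊆ K) = C.filter (fun K => {x} ⊆ K) :=
      Finset.eq_of_subset_of_card_le hsub (le_of_eq hdeg)
    simp only [Nbhd, Finset.mem_inf, id]
    intro K hK
    simp only [Finset.mem_filter] at hK
    have : K ∈ C.filter (fun K => {x} ⊆ K) := by
      simp [Finset.mem_filter, hK.1, hK.2]
    rw [← heq] at this
    simp only [Finset.mem_filter, Finset.insert_subset_iff, Finset.singleton_subset_iff] at this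
    exact this.2.2
end

section
/- Let C be a finite covering of a finite set and F ⊆ S(C) a set of reducible elements of C. Then for any K, K ∈ S(C) − F if and only if K ∈ S(C − F). That is, deleting any set of reducible elements preserves reducibility of the remaining elements. -/
open Finset

variable {α : Type*} [Fintype α] [DecidableEq α]

lemma mem_IFam {F : Finset (Finset α)} {K : Finset α} :
    K ∈ IFam F ↔ ∃ D ⊆ F, D.sup id = K := by
  simp [IFam, Finset.mem_image, Finset.mem_powerset]

lemma IFam_mono {A B : Finset (Finset α)} (h : A ⊆ B) : IFam A ⊆ IFam B := by
  intro K hK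
  rw [mem_IFam] at hK ⊢
  obtain ⟨D, hD, hsup⟩ := hK
  exact ⟨D, hD.trans h, hsup⟩

lemma key (C : Finset (Finset α)) :
    ∀ K ∈ SFam C, ((C \ SFam C).filter (· ⊆ K)).sup id = K := by
  intro K
  induction K using Finset.strongInductionOn with
  | _ K ih =>
    intro hK
    rw [SFam, Finset.mem_filter, mem_IFam] at hK
    obtain ⟨hKC, D, hD, hsup⟩ := hK
    apply Finset.Subset.antisymm
    · intro x hx
      simp only [Finset.mem_sup, id_eq] at hx
      obtain ⟨J, hJ, hxJ⟩ := hx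
      exact (Finset.mem_filter.mp hJ).2 hxJ
    · intro x hx
      rw [← hsup] at hx
      simp only [Finset.mem_sup, id_eq] at hx
      obtain ⟨J, hJD, hxJ⟩ := hx
      have hJe := hD hJD
      have hJC : J ∈ C := Finset.mem_of_mem_erase hJe
      have hJK : J ⊆ K := hsup ▸ Finset.le_sup (f := id) hJD
      have hJne : J ≠ K := Finset.ne_of_mem_erase hJe
      by_cases hJS : J ∈ SFam C
      · have := ih J (Finset.ssubset_iff_subset_ne.mpr ⟨hJK, hJne⟩) hJS
        rw [← this] at hxJ
        simp only [Finset.mem_sup, id_eq] at hxJ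
        obtain ⟨J', hJ', hxJ'⟩ := hxJ
        rw [Finset.mem_filter] at hJ'
        simp only [Finset.mem_sup, id_eq]
        exact ⟨J', Finset.mem_filter.mpr ⟨hJ'.1, hJ'.2.trans hJK⟩, hxJ'⟩
      · simp only [Finset.mem_sup, id_eq]
        exact ⟨J, Finset.mem_filter.mpr ⟨Finset.mem_sdiff.mpr ⟨hJC, hJS⟩, hJK⟩, hxJ⟩

theorem stmt5 (C : Finset (Finset α)) (hC : IsCovering C) (F : Finset (Finset α))
    (hF : F ⊆ SFam C) (K : Finset α) :
    K ∈ SFam C \ F ↔ K ∈ SFam (C \ F) := by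
  constructor
  · rintro h
    rw [Finset.mem_sdiff] at h
    obtain ⟨hKS, hKF⟩ := h
    have hKC : K ∈ C := Finset.mem_of_mem_filter _ hKS
    rw [SFam, Finset.mem_filter]
    refine ⟨Finset.mem_sdiff.mpr ⟨hKC, hKF⟩, ?_⟩
    rw [mem_IFam]
    refine ⟨(C \ SFam C).filter (· ⊆ K), ?_, key C K hKS⟩
    intro J hJ
    rw [Finset.mem_filter, Finset.mem_sdiff] at hJ
    refine Finset.mem_erase.mpr ⟨?_, Finset.mem_sdiff.mpr ⟨hJ.1.1, fun hJF => hJ.1.2 (hF hJF)⟩⟩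
    rintro rfl
    exact hJ.1.2 hKS
  · intro h
    rw [SFam, Finset.mem_filter] at h
    obtain ⟨hKCF, hKI⟩ := h
    rw [Finset.mem_sdiff] at hKCF
    rw [Finset.mem_sdiff, SFam, Finset.mem_filter]
    exact ⟨⟨hKCF.1, IFam_mono (Finset.erase_subset_erase _ (Finset.sdiff_subset)) hKI⟩,
      hKCF.2⟩
end

section
/- For any finite covering C of a finite set, every element of C is a union of elements of reduct(C), i.e., C ⊆ I(reduct(C)), where reduct(C) = C − S(C). -/
open Finset

variable {α : Type*} [Fintype α] [DecidableEq α]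

lemma mem_IFam_iff (F : Finset (Finset α)) (K : Finset α) :
    K ∈ IFam F ↔ (F.filter fun L => L ⊆ K).sup id = K := by
  constructor
  · intro h
    simp only [IFam, Finset.mem_image, Finset.mem_powerset] at h
    obtain ⟨D, hD, rfl⟩ := h
    apply le_antisymm
    · exact Finset.sup_le fun L hL => (Finset.mem_filter.mp hL).2
    · exact Finset.sup_le fun L hL =>
        Finset.le_sup (f := id)
          (Finset.mem_filter.mpr ⟨hD hL, Finset.le_sup (f := id) hL⟩)
  · intro h
    simp only [IFam, Finset.mem_image, Finset.mem_powerset]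
    exact ⟨_, Finset.filter_subset _ _, h⟩

theorem stmt6 (C : Finset (Finset α)) (hC : IsCovering C) :
    C ⊆ IFam (reduct C) := by
  intro K hK
  have main : ∀ n (K : Finset α), K.card = n → K ∈ C → K ∈ IFam (reduct C) := by
    intro n
    induction n using Nat.strong_induction_on with
    | _ n ih =>
      intro K hcard hKC
      by_cases hred : K ∈ reduct C
      · rw [mem_IFam_iff]
        apply le_antisymm
        · exact Finset.sup_le fun L hL => (Finset.mem_filter.mp hL).2
        · exact Finset.le_sup (f := id)
            (Finset.mem_filter.mpr ⟨hred, le_refl K⟩)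
      · have hS : K ∈ SFam C := by
          simp only [reduct, Finset.mem_sdiff] at hred
          tauto
        simp only [SFam, Finset.mem_filter, IFam, Finset.mem_image,
          Finset.mem_powerset] at hS
        obtain ⟨-, D, hD, hsup⟩ := hS
        rw [mem_IFam_iff]
        apply le_antisymm
        · exact Finset.sup_le fun L hL => (Finset.mem_filter.mp hL).2
        · intro x hx
          rw [← hsup] at hx
          obtain ⟨L, hLD, hxL⟩ := Finset.mem_sup.mp hx
          have hLC : L ∈ C := (Finset.erase_subset _ _) (hD hLD)
          have hLK : L ⊆ K := hsup ▸ Finset.le_sup (f := id) hLD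
          have hLne : L ≠ K := Finset.ne_of_mem_erase (hD hLD)
          have hlt : L.card < n := hcard ▸ Finset.card_lt_card (lt_of_le_of_ne hLK hLne)
          have hL : L ∈ IFam (reduct C) := ih _ hlt L rfl hLC
          rw [mem_IFam_iff] at hL
          rw [← hL] at hxL
          obtain ⟨M, hM, hxM⟩ := Finset.mem_sup.mp hxL
          obtain ⟨hMred, hML⟩ := Finset.mem_filter.mp hM
          exact Finset.mem_sup.mpr ⟨M, Finset.mem_filter.mpr ⟨hMred, hML.trans hLK⟩, hxM⟩
  exact main K.card K rfl hK
end

section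
/- For any covering C of a finite universe, the covering of neighborhoods Cov(C) = {N(x) : x ∈ U} has no reducible elements; that is, reduct(Cov(C)) = Cov(C). -/
open Finset

variable {α : Type*} [Fintype α] [DecidableEq α]

lemma mem_nbhd_iff (C : Finset (Finset α)) (x y : α) :
    y ∈ Nbhd C x ↔ ∀ K ∈ C, x ∈ K → y ∈ K := by
  simp [Nbhd, Finset.mem_inf]

lemma mem_nbhd_self (C : Finset (Finset α)) (x : α) : x ∈ Nbhd C x := by
  simp [mem_nbhd_iff]

lemma nbhd_subset (C : Finset (Finset α)) {x y : α} (h : x ∈ Nbhd C y) :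
    Nbhd C x ⊆ Nbhd C y := by
  intro z hz
  rw [mem_nbhd_iff] at h hz ⊢
  intro K hK hyK
  exact hz K hK (h K hK hyK)

theorem stmt8 (C : Finset (Finset α)) (hC : IsCovering C) :
    reduct (Cov C) = Cov C := by
  rw [reduct, Finset.sdiff_eq_self_iff_disjoint, Finset.disjoint_right]
  intro K hKS hK
  unfold SFam IFam at hKS
  simp only [Finset.mem_filter, Finset.mem_image, Finset.mem_powerset] at hKS
  obtain ⟨hKC, D, hD, hDK⟩ := hKS
  obtain ⟨x, -, rfl⟩ := Finset.mem_image.mp hKC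
  have hx : x ∈ D.sup id := hDK ▸ mem_nbhd_self C x
  rw [Finset.mem_sup] at hx
  obtain ⟨N, hND, hxN⟩ := hx
  have hNe := hD hND
  rw [Finset.mem_erase] at hNe
  obtain ⟨hNne, hNC⟩ := hNe
  obtain ⟨y, -, rfl⟩ := Finset.mem_image.mp hNC
  apply hNne
  apply Finset.Subset.antisymm
  · calc Nbhd C y = id (Nbhd C y) := rfl
      _ ⊆ D.sup id := Finset.le_sup hND
      _ = Nbhd C x := hDK
  · exact nbhd_subset C hxN
end

section
/- For a covering C of a finite set U and x ∈ U, the family Γ(x) = {K ∈ C : x ∈ K and for all y ∈ K, ∂({x,y}) = ∂({x})} contains at most one element. -/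
open Finset

variable {α : Type*} [Fintype α] [DecidableEq α]

theorem stmt9 (C : Finset (Finset α)) (hC : IsCovering C) (x : α) :
    (Gamma C x).card ≤ 1 := by
  rw [Finset.card_le_one]
  have key : ∀ K ∈ Gamma C x, ∀ K' ∈ Gamma C x, K ⊆ K' := by
    intro K hK K' hK' y hy
    simp only [Gamma, Finset.mem_filter] at hK hK'
    obtain ⟨hKC, hxK, hdeg⟩ := hK
    obtain ⟨hK'C, hxK', _⟩ := hK'
    have hd := hdeg y hy
    have hsub : C.filter (fun L => ({x, y} : Finset α) ⊆ L) ⊆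
        C.filter (fun L => ({x} : Finset α) ⊆ L) := by
      intro L hL
      simp only [Finset.mem_filter, Finset.insert_subset_iff,
        Finset.singleton_subset_iff] at hL ⊢
      exact ⟨hL.1, hL.2.1⟩
    have heq := Finset.eq_of_subset_of_card_le hsub (le_of_eq hd.symm)
    have hK'mem : K' ∈ C.filter (fun L => ({x} : Finset α) ⊆ L) := by
      simp only [Finset.mem_filter, Finset.singleton_subset_iff]
      exact ⟨hK'C, hxK'⟩
    rw [← heq] at hK'mem
    simp only [Finset.mem_filter, Finset.insert_subset_iff,
      Finset.singleton_subset_iff] at hK'mem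
    exact hK'mem.2.2
  intro a ha b hb
  exact Finset.Subset.antisymm (key a ha b hb) (key b hb a ha)
end

section
/- For a covering C of a finite set U and x ∈ U, if Γ(x) is nonempty then its unique element equals the neighborhood N(x). -/
open Finset

variable {α : Type*} [Fintype α] [DecidableEq α]

theorem stmt10 (C : Finset (Finset α)) (hC : IsCovering C) (x : α)
    (h : (Gamma C x).Nonempty) : ∀ K ∈ Gamma C x, K = Nbhd C x := by
  intro K hK
  rw [Gamma, Finset.mem_filter] at hK
  obtain ⟨hKC, hxK, hdeg⟩ := hK
  apply Finset.Subset.antisymm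
  · intro y hyK
    rw [Nbhd, Finset.mem_inf]
    intro K' hK'
    rw [Finset.mem_filter] at hK'
    have hsub : C.filter (fun L => ({x, y} : Finset α) ⊆ L) ⊆
        C.filter (fun L => ({x} : Finset α) ⊆ L) := by
      intro L hL
      rw [Finset.mem_filter] at hL ⊢
      exact ⟨hL.1, (Finset.insert_subset_iff.mp hL.2).1 |> Finset.singleton_subset_iff.mpr⟩
    have heq := Finset.eq_of_subset_of_card_le hsub (le_of_eq (hdeg y hyK).symm)
    have : K' ∈ C.filter (fun L => ({x, y} : Finset α) ⊆ L) := by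
      rw [heq, Finset.mem_filter]
      exact ⟨hK'.1, Finset.singleton_subset_iff.mpr hK'.2⟩
    rw [Finset.mem_filter, Finset.insert_subset_iff] at this
    exact this.2.2 (Finset.mem_singleton_self y)
  · intro y hy
    rw [Nbhd, Finset.mem_inf] at hy
    exact hy K (Finset.mem_filter.mpr ⟨hKC, hxK⟩)
end

section
/- For a covering C of a finite set U, Cov(C) = reduct(C) if and only if for every x ∈ U, Γ(x) is nonempty. -/
open Finset

variable {α : Type*} [Fintype α] [DecidableEq α]

lemma mem_Nbhd_iff {C : Finset (Finset α)} {x y : α} :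
    y ∈ Nbhd C x ↔ ∀ K ∈ C, x ∈ K → y ∈ K := by
  simp [Nbhd, Finset.mem_inf, Finset.mem_filter, and_imp]

lemma mem_Nbhd_self {C : Finset (Finset α)} {x : α} : x ∈ Nbhd C x :=
  mem_Nbhd_iff.2 fun _ _ h => h

lemma Nbhd_subset {C : Finset (Finset α)} {x : α} {K : Finset α}
    (hK : K ∈ C) (hx : x ∈ K) : Nbhd C x ⊆ K :=
  fun _ hy => mem_Nbhd_iff.1 hy K hK hx

lemma deg_pair_eq_iff {C : Finset (Finset α)} {x y : α} :
    deg C {x, y} = deg C {x} ↔ y ∈ Nbhd C x := by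
  constructor
  · intro h
    rw [mem_Nbhd_iff]
    intro K hK hx
    have hsub : C.filter (fun K => ({x, y} : Finset α) ⊆ K) ⊆
        C.filter (fun K => ({x} : Finset α) ⊆ K) := by
      intro L hL
      simp only [Finset.mem_filter, Finset.insert_subset_iff,
        Finset.singleton_subset_iff] at hL ⊢
      exact ⟨hL.1, hL.2.1⟩
    have heq := Finset.eq_of_subset_of_card_le hsub (le_of_eq h.symm)
    have hKmem : K ∈ C.filter (fun K => ({x} : Finset α) ⊆ K) := by
      simp [hK, hx]
    rw [← heq] at hKmem
    simp only [Finset.mem_filter, Finset.insert_subset_iff,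
      Finset.singleton_subset_iff] at hKmem
    exact hKmem.2.2
  · intro hy
    unfold deg
    congr 1
    apply Finset.filter_congr
    intro K hK
    simp only [Finset.insert_subset_iff, Finset.singleton_subset_iff]
    constructor
    · rintro ⟨hx, -⟩; exact hx
    · intro hx; exact ⟨hx, mem_Nbhd_iff.1 hy K hK hx⟩

lemma Gamma_nonempty_iff {C : Finset (Finset α)} {x : α} :
    (Gamma C x).Nonempty ↔ Nbhd C x ∈ C := by
  constructor
  · rintro ⟨K, hK⟩
    simp only [Gamma, Finset.mem_filter] at hK
    obtain ⟨hKC, hxK, hdeg⟩ := hK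
    have h1 : K ⊆ Nbhd C x := fun y hy => deg_pair_eq_iff.1 (hdeg y hy)
    have h2 : Nbhd C x ⊆ K := Nbhd_subset hKC hxK
    have : K = Nbhd C x := Finset.Subset.antisymm h1 h2
    rwa [← this]
  · intro h
    refine ⟨Nbhd C x, ?_⟩
    simp only [Gamma, Finset.mem_filter]
    exact ⟨h, mem_Nbhd_self, fun y hy => deg_pair_eq_iff.2 hy⟩

theorem stmt13 (C : Finset (Finset α)) (hC : IsCovering C) :
    Cov C = reduct C ↔ ∀ x : α, (Gamma C x).Nonempty := by
  simp only [Gamma_nonempty_iff]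
  constructor
  · intro h x
    have hx : Nbhd C x ∈ Cov C := Finset.mem_image_of_mem _ (Finset.mem_univ x)
    rw [h] at hx
    exact (Finset.mem_sdiff.1 hx).1
  · intro h
    apply Finset.Subset.antisymm
    · intro N hN
      obtain ⟨x, -, rfl⟩ := Finset.mem_image.1 hN
      refine Finset.mem_sdiff.2 ⟨h x, ?_⟩
      intro hS
      simp only [SFam, Finset.mem_filter, IFam, Finset.mem_image,
        Finset.mem_powerset] at hS
      obtain ⟨-, D, hD, hsup⟩ := hS
      have hx : x ∈ D.sup id := by rw [hsup]; exact mem_Nbhd_self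
      obtain ⟨K, hKD, hxK⟩ := Finset.mem_sup.1 hx
      have hKe := hD hKD
      have hKC : K ∈ C := Finset.mem_of_mem_erase hKe
      have hne : K ≠ Nbhd C x := Finset.ne_of_mem_erase hKe
      have h1 : Nbhd C x ⊆ K := Nbhd_subset hKC hxK
      have h2 : K ⊆ Nbhd C x := by
        rw [← hsup]; exact Finset.le_sup (f := id) hKD
      exact hne (Finset.Subset.antisymm h2 h1)
    · intro K hK
      obtain ⟨hKC, hKS⟩ := Finset.mem_sdiff.1 hK
      by_cases hex : ∃ x ∈ K, Nbhd C x = K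
      · obtain ⟨x, -, hx⟩ := hex
        exact Finset.mem_image.2 ⟨x, Finset.mem_univ x, hx⟩
      · push_neg at hex
        exfalso; apply hKS
        refine Finset.mem_filter.2 ⟨hKC, ?_⟩
        refine Finset.mem_image.2 ⟨K.image (Nbhd C), Finset.mem_powerset.2 ?_, ?_⟩
        · intro N hN
          obtain ⟨x, hxK, rfl⟩ := Finset.mem_image.1 hN
          exact Finset.mem_erase.2 ⟨hex x hxK, h x⟩
        · apply Finset.Subset.antisymm
          · show (K.image (Nbhd C)).sup id ≤ K
            apply Finset.sup_le
            intro N hN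
            obtain ⟨x, hxK, rfl⟩ := Finset.mem_image.1 hN
            exact Nbhd_subset hKC hxK
          · intro x hx
            exact Finset.mem_sup.2 ⟨Nbhd C x, Finset.mem_image_of_mem _ hx, mem_Nbhd_self⟩
end

section
/- For a covering C of a finite set U, N_C(x) = P_C(x) for every x ∈ U, where P_C(x) = {y ∈ U : ∂({x,y}) = ∂({x})}; consequently Cov(C) = {P_C(x) : x ∈ U}. -/
open Finset

variable {α : Type*} [Fintype α] [DecidableEq α]

theorem stmt15 (C : Finset (Finset α)) (hC : IsCovering C) :
    (∀ x : α, Nbhd C x = PMap C x) ∧ Cov C = Finset.univ.image (PMap C) := by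
  have key : ∀ x : α, Nbhd C x = PMap C x := by
    intro x
    ext y
    simp only [Nbhd, PMap, Finset.mem_inf, Finset.mem_filter, Finset.mem_univ, true_and, id]
    constructor
    · intro h
      have hsub : C.filter (fun K => x ∈ K) ⊆ C.filter (fun K => ({x, y} : Finset α) ⊆ K) := by
        intro K hK
        simp only [Finset.mem_filter] at hK ⊢
        refine ⟨hK.1, ?_⟩
        intro z hz
        simp only [Finset.mem_insert, Finset.mem_singleton] at hz
        rcases hz with rfl | rfl
        · exact hK.2
        · exact h K hK
      have hsub2 : C.filter (fun K => ({x, y} : Finset α) ⊆ K) ⊆ C.filter (fun K => ({x} : Finset α) ⊆ K) := by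
        intro K hK
        simp only [Finset.mem_filter, Finset.singleton_subset_iff, Finset.insert_subset_iff] at hK ⊢
        exact ⟨hK.1, hK.2.1⟩
      have hsub3 : C.filter (fun K => ({x} : Finset α) ⊆ K) ⊆ C.filter (fun K => x ∈ K) := by
        intro K hK
        simp only [Finset.mem_filter, Finset.singleton_subset_iff] at hK ⊢
        exact hK
      have := Finset.card_le_card (hsub3.trans hsub)
      have := Finset.card_le_card hsub2
      unfold deg
      omega
    · intro h K hK
      obtain ⟨hKC, hxK⟩ := hK
      have hsub : C.filter (fun K => ({x, y} : Finset α) ⊆ K) ⊆ C.filter (fun K => ({x} : Finset α) ⊆ K) := by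
        intro L hL
        simp only [Finset.mem_filter, Finset.singleton_subset_iff, Finset.insert_subset_iff] at hL ⊢
        exact ⟨hL.1, hL.2.1⟩
      have heq : C.filter (fun K => ({x, y} : Finset α) ⊆ K) = C.filter (fun K => ({x} : Finset α) ⊆ K) :=
        Finset.eq_of_subset_of_card_le hsub (le_of_eq h.symm)
      have hKmem : K ∈ C.filter (fun K => ({x} : Finset α) ⊆ K) := by
        simp only [Finset.mem_filter, Finset.singleton_subset_iff]
        exact ⟨hKC, hxK⟩
      rw [← heq] at hKmem
      simp only [Finset.mem_filter, Finset.insert_subset_iff, Finset.singleton_subset_iff] at hKmem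
      exact hKmem.2.2
  refine ⟨key, ?_⟩
  unfold Cov
  rw [show Nbhd C = PMap C from funext key]
end

section
/- Let U be a finite set with |U| = n > 1, and let C₁ ≠ C₂ be coverings of U. The repeat degree functions of C₁ and C₂ agree on all subsets X ⊆ U with 1 ≤ |X| ≤ n−1 if and only if {C₁, C₂} = {{X ⊆ U : |X| even, X ≠ ∅}, {X ⊆ U : |X| odd}} (the families of all nonempty even-size subsets and all odd-size subsets of U, respectively). -/
open Finset

variable {α : Type*} [Fintype α] [DecidableEq α]

private lemma sum_indicator_eq_deg (C : Finset (Finset α)) (X : Finset α) :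
    ∑ Y ∈ univ.powerset.filter (fun Y => X ⊆ Y), (if Y ∈ C then (1:ℤ) else 0)
      = (deg C X : ℤ) := by
  rw [Finset.sum_boole]
  norm_cast
  congr 1
  ext K
  simp only [mem_filter, mem_powerset, deg, subset_univ, true_and]
  tauto

private lemma sum_neg_pow_supersets (K : Finset α) (hK : K ≠ univ) :
    ∑ Y ∈ univ.powerset.filter (fun Y => K ⊆ Y),
      (-1:ℤ)^(Fintype.card α - Y.card) = 0 := by
  have h : ∑ Y ∈ univ.powerset.filter (fun Y => K ⊆ Y), (-1:ℤ)^(Fintype.card α - Y.card)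
      = ∑ S ∈ (univ \ K).powerset, (-1:ℤ)^(Fintype.card α - K.card) * (-1)^S.card := by
    refine Finset.sum_nbij' (fun Y => Y \ K) (fun S => S ∪ K) ?_ ?_ ?_ ?_ ?_
    · intro Y hY
      simp only [mem_filter, mem_powerset] at hY ⊢
      exact sdiff_subset_sdiff (subset_univ Y) le_rfl
    · intro S hS
      simp only [mem_powerset] at hS
      simp only [mem_filter, mem_powerset, subset_univ, true_and]
      exact subset_union_right
    · intro Y hY
      simp only [mem_filter, mem_powerset] at hY
      exact sdiff_union_of_subset hY.2
    · intro S hS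
      simp only [mem_powerset] at hS
      exact union_sdiff_cancel_right (disjoint_of_subset_left hS sdiff_disjoint)
    · intro Y hY
      simp only [mem_filter, mem_powerset] at hY
      have h1 : K.card ≤ Y.card := card_le_card hY.2
      have h2 : Y.card ≤ Fintype.card α := card_le_univ Y
      have h3 : (Y \ K).card = Y.card - K.card := card_sdiff_of_subset hY.2
      rw [h3, ← pow_add, neg_one_pow_eq_pow_mod_two (Fintype.card α - Y.card),
        neg_one_pow_eq_pow_mod_two (Fintype.card α - K.card + (Y.card - K.card))]
      congr 1
      omega
  rw [h, ← Finset.mul_sum, Finset.sum_powerset_neg_one_pow_card, if_neg, mul_zero]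
  rw [sdiff_eq_empty_iff_subset]
  intro hc
  exact hK (univ_subset_iff.mp hc)

private lemma key_f (C₁ C₂ : Finset (Finset α))
    (hh : ∀ X : Finset α, 1 ≤ X.card → X.card ≤ Fintype.card α - 1 → deg C₁ X = deg C₂ X) :
    ∀ K : Finset α, K ≠ ∅ →
      ((if K ∈ C₁ then (1:ℤ) else 0) - (if K ∈ C₂ then 1 else 0))
        = (-1)^(Fintype.card α - K.card)
          * ((if univ ∈ C₁ then (1:ℤ) else 0) - (if univ ∈ C₂ then 1 else 0)) := by
  set a : ℤ := (if univ ∈ C₁ then (1:ℤ) else 0) - (if univ ∈ C₂ then 1 else 0) with ha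
  set f : Finset α → ℤ := fun K => (if K ∈ C₁ then (1:ℤ) else 0) - (if K ∈ C₂ then 1 else 0)
    with hfdef
  have main : ∀ K : Finset α, K.card ≤ Fintype.card α → K ≠ ∅ →
      f K = (-1)^(Fintype.card α - K.card) * a := by
    intro K
    refine Finset.strongDownwardInduction (n := Fintype.card α)
      (p := fun t => t ≠ ∅ → f t = (-1)^(Fintype.card α - t.card) * a) ?_ K
    intro t₁ IH hcard hne
    by_cases ht : t₁ = univ
    · subst ht
      rw [card_univ, Nat.sub_self, pow_zero, one_mul]
    · have hlt : t₁.card < Fintype.card α := by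
        have := Finset.card_lt_card (ssubset_univ_iff.mpr ht)
        simpa using this
    -- g t₁ = 0
      set S := univ.powerset.filter (fun Y => t₁ ⊆ Y) with hS
      have hsum : ∑ Y ∈ S, f Y = 0 := by
        have h1 : ∑ Y ∈ S, f Y
            = (∑ Y ∈ S, (if Y ∈ C₁ then (1:ℤ) else 0))
              - ∑ Y ∈ S, (if Y ∈ C₂ then (1:ℤ) else 0) := by
          rw [← Finset.sum_sub_distrib]
        rw [h1, sum_indicator_eq_deg, sum_indicator_eq_deg,
          hh t₁ (Finset.one_le_card.mpr (nonempty_iff_ne_empty.mpr hne)) (by omega), sub_self]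
      have ht₁S : t₁ ∈ S := mem_filter.mpr ⟨mem_powerset.mpr (subset_univ _), subset_rfl⟩
      rw [← Finset.add_sum_erase S f ht₁S] at hsum
      have herase : ∀ Y ∈ S.erase t₁, f Y = (-1:ℤ)^(Fintype.card α - Y.card) * a := by
        intro Y hY
        rw [mem_erase, hS, mem_filter] at hY
        have hss : t₁ ⊂ Y := lt_of_le_of_ne hY.2.2 (Ne.symm hY.1)
        have hYne : Y ≠ ∅ := by
          intro h
          rw [h] at hss
          exact absurd hss.1 (by simp [hne])
        exact IH (card_le_univ Y) hss hYne
      rw [Finset.sum_congr rfl herase, ← Finset.sum_mul] at hsum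
      have hT := sum_neg_pow_supersets t₁ ht
      rw [← hS, ← Finset.add_sum_erase S _ ht₁S] at hT
      have : ∑ Y ∈ S.erase t₁, (-1:ℤ)^(Fintype.card α - Y.card)
          = -(-1:ℤ)^(Fintype.card α - t₁.card) := by linarith
      rw [this] at hsum
      linarith
  intro K hK
  exact main K (card_le_univ K) hK

private lemma deg_even_odd (X : Finset α) (hX : 1 ≤ X.card)
    (hX2 : X.card ≤ Fintype.card α - 1) (hcard : 1 ≤ Fintype.card α) :
    deg (univ.powerset.filter fun K => Even K.card ∧ K ≠ ∅) X
      = deg (univ.powerset.filter fun K => Odd K.card) X := by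
  have hXu : X ≠ univ := by
    intro h
    rw [h, card_univ] at hX2
    omega
  obtain ⟨x, hx⟩ : ∃ x, x ∉ X := by
    by_contra h
    push_neg at h
    exact hXu (eq_univ_of_forall h)
  unfold deg
  refine Finset.card_nbij' (fun K => if x ∈ K then K.erase x else insert x K)
    (fun K => if x ∈ K then K.erase x else insert x K) ?_ ?_ ?_ ?_
  · intro K hK
    simp only [mem_coe, mem_filter, mem_powerset] at hK ⊢
    obtain ⟨⟨hKu, hKe, hKne⟩, hXK⟩ := hK
    by_cases hxK : x ∈ K
    · simp only [if_pos hxK]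
      have h1 : 1 ≤ K.card := Finset.one_le_card.mpr ⟨x, hxK⟩
      have h2 : (K.erase x).card = K.card - 1 := card_erase_of_mem hxK
      refine ⟨⟨(erase_subset _ _).trans hKu, ?_⟩, subset_erase.mpr ⟨hXK, hx⟩⟩
      rw [Nat.odd_iff, h2]
      rw [Nat.even_iff] at hKe
      omega
    · simp only [if_neg hxK]
      have h2 : (insert x K).card = K.card + 1 := card_insert_of_notMem hxK
      refine ⟨⟨insert_subset_iff.mpr ⟨mem_univ x, hKu⟩, ?_⟩, hXK.trans (subset_insert _ _)⟩
      rw [Nat.odd_iff, h2]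
      rw [Nat.even_iff] at hKe
      omega
  · intro K hK
    simp only [mem_coe, mem_filter, mem_powerset] at hK ⊢
    obtain ⟨⟨hKu, hKo⟩, hXK⟩ := hK
    by_cases hxK : x ∈ K
    · simp only [if_pos hxK]
      have h1 : 1 ≤ K.card := Finset.one_le_card.mpr ⟨x, hxK⟩
      have h2 : (K.erase x).card = K.card - 1 := card_erase_of_mem hxK
      have hsub : X ⊆ K.erase x := subset_erase.mpr ⟨hXK, hx⟩
      refine ⟨⟨(erase_subset _ _).trans hKu, ?_, ?_⟩, hsub⟩
      · rw [Nat.even_iff, h2]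
        rw [Nat.odd_iff] at hKo
        omega
      · intro h
        rw [h, subset_empty] at hsub
        rw [hsub] at hX
        simp at hX
    · simp only [if_neg hxK]
      have h2 : (insert x K).card = K.card + 1 := card_insert_of_notMem hxK
      refine ⟨⟨insert_subset_iff.mpr ⟨mem_univ x, hKu⟩, ?_, ?_⟩,
        hXK.trans (subset_insert _ _)⟩
      · rw [Nat.even_iff, h2]
        rw [Nat.odd_iff] at hKo
        omega
      · exact ne_empty_of_mem (mem_insert_self x K)
  · intro K hK
    by_cases hxK : x ∈ K
    · simp [hxK, insert_erase hxK]
    · simp [hxK, erase_insert hxK]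
  · intro K hK
    by_cases hxK : x ∈ K
    · simp [hxK, insert_erase hxK]
    · simp [hxK, erase_insert hxK]

private lemma families (C₁ C₂ : Finset (Finset α)) (h1 : ∅ ∉ C₁) (h2 : ∅ ∉ C₂)
    (key : ∀ K : Finset α, K ≠ ∅ →
      ((if K ∈ C₁ then (1:ℤ) else 0) - (if K ∈ C₂ then 1 else 0))
        = (-1)^(Fintype.card α - K.card)) :
    ({C₁, C₂} : Set (Finset (Finset α))) =
      {univ.powerset.filter (fun X => Even X.card ∧ X ≠ ∅),
       univ.powerset.filter (fun X => Odd X.card)} := by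
  have hm1 : ∀ K : Finset α, K ∈ C₁ ↔ (K ≠ ∅ ∧ Even (Fintype.card α - K.card)) := by
    intro K
    constructor
    · intro hK
      have hKne : K ≠ ∅ := fun h => h1 (h ▸ hK)
      have hkey := key K hKne
      refine ⟨hKne, ?_⟩
      rcases Nat.even_or_odd (Fintype.card α - K.card) with h|h
      · exact h
      · rw [h.neg_one_pow] at hkey
        by_cases k2 : K ∈ C₂ <;> simp [hK, k2] at hkey
    · rintro ⟨hKne, hev⟩
      have hkey := key K hKne
      rw [hev.neg_one_pow] at hkey
      by_cases k1 : K ∈ C₁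
      · exact k1
      · exfalso
        by_cases k2 : K ∈ C₂ <;> simp [k1, k2] at hkey
  have hm2 : ∀ K : Finset α, K ∈ C₂ ↔ (K ≠ ∅ ∧ Odd (Fintype.card α - K.card)) := by
    intro K
    constructor
    · intro hK
      have hKne : K ≠ ∅ := fun h => h2 (h ▸ hK)
      have hkey := key K hKne
      refine ⟨hKne, ?_⟩
      rcases Nat.even_or_odd (Fintype.card α - K.card) with h|h
      · rw [h.neg_one_pow] at hkey
        by_cases k1 : K ∈ C₁ <;> simp [hK, k1] at hkey
      · exact h
    · rintro ⟨hKne, hodd⟩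
      have hkey := key K hKne
      rw [hodd.neg_one_pow] at hkey
      by_cases k2 : K ∈ C₂
      · exact k2
      · exfalso
        by_cases k1 : K ∈ C₁ <;> simp [k1, k2] at hkey
  rcases Nat.even_or_odd (Fintype.card α) with hpar|hpar
  · have e1 : C₁ = univ.powerset.filter (fun X => Even X.card ∧ X ≠ ∅) := by
      ext K
      rw [hm1 K]
      have hc := card_le_univ K
      rw [Nat.even_iff] at hpar
      simp only [mem_filter, mem_powerset, subset_univ, true_and, ne_eq,
        ← Finset.card_eq_zero, Nat.even_iff]
      omega
    have e2 : C₂ = univ.powerset.filter (fun X => Odd X.card) := by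
      ext K
      rw [hm2 K]
      have hc := card_le_univ K
      rw [Nat.even_iff] at hpar
      simp only [mem_filter, mem_powerset, subset_univ, true_and, ne_eq,
        ← Finset.card_eq_zero, Nat.odd_iff]
      omega
    rw [e1, e2]
  · have e1 : C₁ = univ.powerset.filter (fun X => Odd X.card) := by
      ext K
      rw [hm1 K]
      have hc := card_le_univ K
      rw [Nat.odd_iff] at hpar
      simp only [mem_filter, mem_powerset, subset_univ, true_and, ne_eq,
        ← Finset.card_eq_zero, Nat.even_iff, Nat.odd_iff]
      omega
    have e2 : C₂ = univ.powerset.filter (fun X => Even X.card ∧ X ≠ ∅) := by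
      ext K
      rw [hm2 K]
      have hc := card_le_univ K
      rw [Nat.odd_iff] at hpar
      simp only [mem_filter, mem_powerset, subset_univ, true_and, ne_eq,
        ← Finset.card_eq_zero, Nat.even_iff, Nat.odd_iff]
      omega
    rw [e1, e2, Set.pair_comm]

theorem stmt19 (C₁ C₂ : Finset (Finset α)) (h1 : IsCovering C₁) (h2 : IsCovering C₂)
    (n : ℕ) (hn : Fintype.card α = n) (hn1 : 1 < n) (hne : C₁ ≠ C₂) :
    (∀ X : Finset α, 1 ≤ X.card → X.card ≤ n - 1 → deg C₁ X = deg C₂ X) ↔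
      ({C₁, C₂} : Set (Finset (Finset α))) =
        {Finset.univ.powerset.filter (fun X => Even X.card ∧ X ≠ ∅),
         Finset.univ.powerset.filter (fun X => Odd X.card)} := by
  subst hn
  constructor
  · intro hh
    have key := key_f C₁ C₂ hh
    by_cases u1 : univ ∈ C₁ <;> by_cases u2 : univ ∈ C₂
    · exfalso; apply hne; ext K
      by_cases hK : K = ∅
      · rw [hK]; exact iff_of_false h1.1 h2.1
      · have hkey := key K hK
        rw [if_pos u1, if_pos u2, sub_self, mul_zero, sub_eq_zero] at hkey
        by_cases k1 : K ∈ C₁ <;> by_cases k2 : K ∈ C₂ <;> simp [k1, k2] at hkey ⊢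
    · refine families C₁ C₂ h1.1 h2.1 ?_
      intro K hK
      have hkey := key K hK
      rw [if_pos u1, if_neg u2] at hkey
      simpa using hkey
    · rw [Set.pair_comm]
      refine families C₂ C₁ h2.1 h1.1 ?_
      intro K hK
      have hkey := key K hK
      rw [if_neg u1, if_pos u2] at hkey
      simp only [zero_sub, mul_neg_one] at hkey
      linarith
    · exfalso; apply hne; ext K
      by_cases hK : K = ∅
      · rw [hK]; exact iff_of_false h1.1 h2.1
      · have hkey := key K hK
        rw [if_neg u1, if_neg u2, sub_self, mul_zero, sub_eq_zero] at hkey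
        by_cases k1 : K ∈ C₁ <;> by_cases k2 : K ∈ C₂ <;> simp [k1, k2] at hkey ⊢
  · intro hpair X hX1 hX2
    have h1' : C₁ ∈ ({C₁, C₂} : Set (Finset (Finset α))) := Or.inl rfl
    have h2' : C₂ ∈ ({C₁, C₂} : Set (Finset (Finset α))) := Or.inr rfl
    rw [hpair] at h1' h2'
    simp only [Set.mem_insert_iff, Set.mem_singleton_iff] at h1' h2'
    rcases h1' with e1|e1 <;> rcases h2' with e2|e2
    · exact absurd (e1.trans e2.symm) hne
    · rw [e1, e2]; exact deg_even_odd X hX1 hX2 (by omega)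
    · rw [e1, e2]; exact (deg_even_odd X hX1 hX2 (by omega)).symm
    · exact absurd (e1.trans e2.symm) hne
end
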